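/- Let R be a finite field equipped with the discrete topology, Γ a set with at least two elements, φ: Γ → Γ a map, and w ∈ R^Γ a weight vector. If there exists a non-quasi-periodic point θ ∈ Γ of φ such that w_{φ^n(θ)} ≠ 0 for all n ≥ 0, then the dynamical system (R^Γ, σ_{φ,w}) is Li–Yorke chaotic. -/
import Mathlib


open Function Set

namespace WGShift

variable {Γ R : Type*}

/-- The basic entourage `O_M` determined by a set of coordinates `M ⊆ Γ`. -/
def shiftOM (M : Set Γ) : Set ((Γ → R) × (Γ → R)) :=
  {p | ∀ α ∈ M, p.1 α = p.2 α}

/-- Entourages of the product uniformity on `Γ → R` (with `R` discrete):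
exactly the sets containing some `O_M` with `M` finite. -/
def IsEntourage (O : Set ((Γ → R) × (Γ → R))) : Prop :=
  ∃ M : Set Γ, M.Finite ∧ shiftOM M ⊆ O

/-- The weighted generalized shift `σ_{φ,w}`. -/
def wshift [Mul R] (φ : Γ → Γ) (w : Γ → R) : (Γ → R) → (Γ → R) :=
  fun x α => w α * x (φ α)

/-- `α` is quasi-periodic under `φ` if `φ^i α = φ^j α` for some `i > j ≥ 1`. -/
def IsQuasiPeriodic (φ : Γ → Γ) (α : Γ) : Prop :=
  ∃ i j : ℕ, 1 ≤ j ∧ j < i ∧ φ^[i] α = φ^[j] α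

/-- Sensitivity of `(R^Γ, f)` with respect to the product uniformity. -/
def Sensitive [TopologicalSpace R] (f : (Γ → R) → (Γ → R)) : Prop :=
  ∃ O : Set ((Γ → R) × (Γ → R)), IsEntourage O ∧
    ∀ x : Γ → R, ∀ U : Set (Γ → R), IsOpen U → x ∈ U →
      ∃ y ∈ U, ∃ n : ℕ, (f^[n] x, f^[n] y) ∉ O

/-- Strong sensitivity of `(R^Γ, f)` with respect to the product uniformity. -/
def StronglySensitive [TopologicalSpace R] (f : (Γ → R) → (Γ → R)) : Prop :=
  ∃ O : Set ((Γ → R) × (Γ → R)), IsEntourage O ∧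
    ∀ x : Γ → R, ∀ U : Set (Γ → R), IsOpen U → x ∈ U →
      ∃ y ∈ U, ∃ N : ℕ, ∀ n ≥ N, (f^[n] x, f^[n] y) ∉ O

/-- `x, y` are proximal for `f`. -/
def ProximalPair (f : (Γ → R) → (Γ → R)) (x y : Γ → R) : Prop :=
  ∀ O : Set ((Γ → R) × (Γ → R)), IsEntourage O →
    ∃ n ≥ 1, (f^[n] x, f^[n] y) ∈ O

/-- `x, y` are asymptotic for `f`. -/
def AsymptoticPair (f : (Γ → R) → (Γ → R)) (x y : Γ → R) : Prop :=
  ∀ O : Set ((Γ → R) × (Γ → R)), IsEntourage O →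
    ∃ N ≥ 1, ∀ n ≥ N, (f^[n] x, f^[n] y) ∈ O

/-- A scrambled pair: proximal but not asymptotic. -/
def ScrambledPair (f : (Γ → R) → (Γ → R)) (x y : Γ → R) : Prop :=
  ProximalPair f x y ∧ ¬ AsymptoticPair f x y

/-- Li–Yorke chaos: existence of an uncountable scrambled set. -/
def LiYorkeChaotic (f : (Γ → R) → (Γ → R)) : Prop :=
  ∃ A : Set (Γ → R), ¬ A.Countable ∧
    ∀ x ∈ A, ∀ y ∈ A, x ≠ y → ScrambledPair f x y

/-- Topological transitivity of `(R^Γ, f)`. -/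
def TopTransitive [TopologicalSpace R] (f : (Γ → R) → (Γ → R)) : Prop :=
  ∀ U V : Set (Γ → R), IsOpen U → IsOpen V → U.Nonempty → V.Nonempty →
    ∃ n ≥ 1, (f^[n] '' U ∩ V).Nonempty

/-- The set of periodic points of `f`. -/
def perPoints (f : (Γ → R) → (Γ → R)) : Set (Γ → R) :=
  {x | ∃ n ≥ 1, f^[n] x = x}

/-- Devaney chaos: sensitive, topologically transitive, dense periodic points. -/
def DevaneyChaotic [TopologicalSpace R] (f : (Γ → R) → (Γ → R)) : Prop :=
  Sensitive f ∧ TopTransitive f ∧ Dense (perPoints f)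

open Classical in
/-- The point `x^A ∈ R^Γ` built from `A ⊆ ℕ` along the orbit of `ν`. -/
noncomputable def xA [Zero R] [One R] (φ : Γ → Γ) (ν : Γ) (A : Set ℕ) : Γ → R :=
  fun α => if ∃ p : ℕ, p ∈ A ∧ α = φ^[p * (p + 1) / 2] ν then 1 else 0

end WGShift

open WGShift

namespace Stmt10Aux

/-- Triangular numbers. -/
def T (p : ℕ) : ℕ := p * (p + 1) / 2

lemma T_succ (p : ℕ) : T (p + 1) = T p + (p + 1) := by
  obtain ⟨c, hc⟩ := Nat.even_mul_succ_self p
  have h3 : (p + 1) * (p + 1 + 1) = p * (p + 1) + 2 * (p + 1) := by ring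
  show (p + 1) * (p + 1 + 1) / 2 = p * (p + 1) / 2 + (p + 1)
  omega

lemma T_strictMono : StrictMono T :=
  strictMono_nat_of_lt_succ (fun n => by rw [T_succ]; omega)

lemma le_T (p : ℕ) : p ≤ T p := by
  induction p with
  | zero => simp [T]
  | succ n ih => rw [T_succ]; omega

lemma orbit_inj {Γ : Type*} {φ : Γ → Γ} {θ : Γ} (hq : ¬ IsQuasiPeriodic φ θ) :
    Function.Injective fun n => φ^[n] θ := by
  have key : ∀ i j : ℕ, j < i → φ^[i] θ ≠ φ^[j] θ := by
    intro i j hji h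
    rcases Nat.eq_zero_or_pos j with rfl | hj
    · refine hq ⟨i + 1, 1, le_refl 1, by omega, ?_⟩
      rw [Function.iterate_succ_apply', h]
      simp
    · exact hq ⟨i, j, hj, hji, h⟩
  intro i j h
  simp only at h
  by_contra hne
  rcases lt_or_gt_of_ne hne with hlt | hlt
  · exact key j i hlt h.symm
  · exact key i j hlt h

lemma exists_delta {Γ : Type*} {φ : Γ → Γ} {θ : Γ}
    (hinj : Function.Injective fun n => φ^[n] θ) (α : Γ) :
    ∃ δ : ℤ, ∀ n m : ℕ, φ^[n] α = φ^[m] θ → (n : ℤ) = m + δ := by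
  by_cases h : ∃ n m : ℕ, φ^[n] α = φ^[m] θ
  · obtain ⟨n₀, m₀, h₀⟩ := h
    refine ⟨(n₀ : ℤ) - m₀, ?_⟩
    intro n m hnm
    rcases le_total n n₀ with hle | hle
    · have e1 : φ^[n₀] α = φ^[(n₀ - n) + m] θ := by
        have e2 : φ^[n₀ - n] (φ^[n] α) = φ^[n₀] α := by
          rw [← Function.iterate_add_apply]
          congr 1; omega
        rw [← e2, hnm, ← Function.iterate_add_apply]
      have hm : m₀ = (n₀ - n) + m := hinj (h₀.symm.trans e1)
      omega
    · have e1 : φ^[n] α = φ^[(n - n₀) + m₀] θ := by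
        have e2 : φ^[n - n₀] (φ^[n₀] α) = φ^[n] α := by
          rw [← Function.iterate_add_apply]
          congr 1; omega
        rw [← e2, h₀, ← Function.iterate_add_apply]
      have hm : m = (n - n₀) + m₀ := hinj ((hnm.symm.trans e1))
      omega
  · refine ⟨0, fun n m hnm => absurd ⟨n, m, hnm⟩ h⟩

lemma wshift_iter {Γ R : Type*} [Field R] (φ : Γ → Γ) (w : Γ → R) :
    ∀ (n : ℕ) (x : Γ → R) (α : Γ),
      (wshift φ w)^[n] x α = (∏ k ∈ Finset.range n, w (φ^[k] α)) * x (φ^[n] α) := by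
  intro n
  induction n with
  | zero => intro x α; simp
  | succ n ih =>
    intro x α
    rw [Function.iterate_succ_apply, ih]
    simp only [wshift]
    rw [Finset.prod_range_succ, Function.iterate_succ_apply']
    ring

lemma xA_eval_mem {Γ R : Type*} [Zero R] [One R] {φ : Γ → Γ} {θ : Γ}
    {A : Set ℕ} {p : ℕ} (hp : p ∈ A) :
    xA (R := R) φ θ A (φ^[p * (p + 1) / 2] θ) = 1 := by
  unfold xA
  rw [if_pos ⟨p, hp, rfl⟩]

lemma xA_eval_notMem {Γ R : Type*} [Zero R] [One R] {φ : Γ → Γ} {θ : Γ}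
    (hinj : Function.Injective fun n => φ^[n] θ) {A : Set ℕ} {p : ℕ} (hp : p ∉ A) :
    xA (R := R) φ θ A (φ^[p * (p + 1) / 2] θ) = 0 := by
  unfold xA
  rw [if_neg]
  rintro ⟨q, hq, he⟩
  have h1 : p * (p + 1) / 2 = q * (q + 1) / 2 := hinj he
  have h2 : p = q := T_strictMono.injective (show T p = T q from h1)
  exact hp (h2 ▸ hq)

lemma xA_support {Γ R : Type*} [Zero R] [One R] {φ : Γ → Γ} {θ : Γ}
    (A B : Set ℕ) (β : Γ) (h : xA (R := R) φ θ A β ≠ xA (R := R) φ θ B β) :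
    ∃ p : ℕ, β = φ^[p * (p + 1) / 2] θ := by
  by_contra hc
  push_neg at hc
  apply h
  unfold xA
  rw [if_neg, if_neg]
  · rintro ⟨p, -, hp⟩; exact hc p hp
  · rintro ⟨p, -, hp⟩; exact hc p hp

/-- Encoding of the length-`n` prefix of `s`. -/
def pref (s : ℕ → Bool) (n : ℕ) : ℕ := Encodable.encode ((List.range n).map s)

lemma pref_inj (s : ℕ → Bool) : Function.Injective (pref s) := by
  intro n m h
  have h2 := Encodable.encode_injective h
  have hl := congrArg List.length h2
  simpa using hl

lemma mem_range_pref {s t : ℕ → Bool} {n : ℕ} (h : pref s n ∈ Set.range (pref t)) :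
    ∀ i < n, s i = t i := by
  obtain ⟨m, hm⟩ := h
  have hlist := Encodable.encode_injective hm
  have hlen : m = n := by have := congrArg List.length hlist; simpa using this
  subst hlen
  intro i hi
  have h2 := congrArg (fun l => l[i]?) hlist
  simp only [List.getElem?_map, List.getElem?_range, hi, Option.map_some] at h2
  exact (Option.some_injective _ h2).symm

lemma diff_infinite {s t : ℕ → Bool} (h : s ≠ t) :
    (Set.range (pref s) \ Set.range (pref t)).Infinite := by
  obtain ⟨k, hk⟩ := Function.ne_iff.mp h
  have hsub : pref s '' (Set.Ioi k) ⊆ Set.range (pref s) \ Set.range (pref t) := by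
    rintro _ ⟨n, hn, rfl⟩
    exact ⟨⟨n, rfl⟩, fun hmem => hk (mem_range_pref hmem k hn)⟩
  exact ((Set.Ioi_infinite k).image ((pref_inj s).injOn)).mono hsub

end Stmt10Aux

open Stmt10Aux in
theorem stmt10 {R Γ : Type*} [Field R] [Fintype R]
    [TopologicalSpace R] [DiscreteTopology R] [Nontrivial Γ]
    (φ : Γ → Γ) (w : Γ → R)
    (h : ∃ θ : Γ, ¬ IsQuasiPeriodic φ θ ∧ ∀ n : ℕ, w (φ^[n] θ) ≠ 0) :
    LiYorkeChaotic (wshift φ w) := by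
  classical
  obtain ⟨θ, hq, hw⟩ := h
  have hinj : Function.Injective fun n => φ^[n] θ := orbit_inj hq
  choose δ hδ using fun α => exists_delta hinj α
  set g : (ℕ → Bool) → (Γ → R) := fun s => xA φ θ (Set.range (pref s)) with hg
  -- scrambled pairs
  have hscr : ∀ s t : ℕ → Bool, s ≠ t → ScrambledPair (wshift φ w) (g s) (g t) := by
    intro s t hst
    constructor
    · -- proximal
      rintro O ⟨M, hMfin, hMO⟩
      set F := hMfin.toFinset with hF
      set D := F.sup (fun α => (δ α).natAbs) with hD
      set q := 2 * D + 1 with hq'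
      refine ⟨T q + D + 1, by omega, hMO ?_⟩
      intro α hα
      dsimp only
      rw [wshift_iter, wshift_iter]
      congr 1
      by_contra hne
      obtain ⟨p, hp⟩ := xA_support _ _ _ hne
      have hδα := hδ α (T q + D + 1) (p * (p + 1) / 2) (by rw [← hp])
      have hbound : (δ α).natAbs ≤ D := Finset.le_sup (f := fun α => (δ α).natAbs) (hMfin.mem_toFinset.mpr hα)
      have eTp : p * (p + 1) / 2 = T p := rfl
      rw [eTp] at hδα
      have h1 : T q < T p := by omega
      have h2 : q < p := T_strictMono.lt_iff_lt.mp h1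
      have h3 : T (q + 1) ≤ T p := T_strictMono.monotone (by omega)
      rw [T_succ] at h3
      omega
    · -- not asymptotic
      intro hA
      obtain ⟨N, hN1, hN⟩ := hA (shiftOM {θ}) ⟨{θ}, Set.finite_singleton θ, subset_rfl⟩
      obtain ⟨p, hp, hpN⟩ := (diff_infinite hst).exists_gt N
      have hn : N ≤ p * (p + 1) / 2 := le_trans (le_of_lt hpN) (le_T p)
      have hmem := hN (p * (p + 1) / 2) hn θ (Set.mem_singleton θ)
      dsimp only at hmem
      rw [wshift_iter, wshift_iter] at hmem
      have hc : (∏ k ∈ Finset.range (p * (p + 1) / 2), w (φ^[k] θ)) ≠ 0 :=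
        Finset.prod_ne_zero_iff.mpr (fun k _ => hw k)
      have hvals := mul_left_cancel₀ hc hmem
      rw [hg] at hvals
      simp only at hvals
      rw [xA_eval_mem hp.1, xA_eval_notMem hinj hp.2] at hvals
      exact one_ne_zero hvals
  -- injectivity of g
  have ginj : Function.Injective g := by
    intro s t hst
    by_contra hne
    obtain ⟨p, hp⟩ := (diff_infinite hne).nonempty
    have h1 := congrFun hst (φ^[p * (p + 1) / 2] θ)
    rw [hg] at h1
    simp only at h1
    rw [xA_eval_mem hp.1, xA_eval_notMem hinj hp.2] at h1
    exact one_ne_zero h1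
  refine ⟨Set.range g, ?_, ?_⟩
  · intro hcount
    have hctbl : Countable (ℕ → Bool) := by
      haveI := hcount.to_subtype
      exact Countable.of_equiv _ (Equiv.ofInjective g ginj).symm
    obtain ⟨f, hf⟩ := (nonempty_embedding_nat (ℕ → Bool))
    let e : Set ℕ → (ℕ → Bool) := fun S n => decide (n ∈ S)
    have he : Function.Injective e := by
      intro S T hST
      ext n
      have h2 := congrFun hST n
      simp only [e, decide_eq_decide] at h2
      exact h2
    exact Function.cantor_injective (f ∘ e) (hf.comp he)
  · rintro _ ⟨s, rfl⟩ _ ⟨t, rfl⟩ hxy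
    exact hscr s t (fun e => hxy (by rw [e]))
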